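/- arXiv:1412.0742 — 3 statements merged into one kernel-verified Lean document; each statement's English description precedes it below -/
import Mathlib

section
/- Let f1, f2 : ℝ≥0 → ℝ≥0 be the IOSCFs of two ESR modules, fi(u) = (1/2)(2u + Ki(u) − sqrt(Ki(u)² + 4 Ki_d u γi)) with Ki(u) = −u + ci + Ki_d γi and constants ci, Ki_d, γi > 0. Then the derivative of f2 ∘ f1 at 0 equals c1 c2 / ((c1 + K1_d γ1)(c2 + K2_d γ2)) and is strictly less than 1. -/
/-! At `u = 0` the radicand of `fᵢ` is the perfect square `(cᵢ + Kᵢ_d γᵢ)²`, so `fᵢ 0 = 0` and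
the chain rule gives `(f₂ ∘ f₁)'(0) = f₂'(0) f₁'(0)`. Differentiating the square root there yields
`fᵢ'(0) = cᵢ / (cᵢ + Kᵢ_d γᵢ)`, a number in `[0, 1)` because `Kᵢ_d γᵢ > 0`. -/

lemma div_add_lt_one {a b : ℝ} (ha : 0 ≤ a) (hb : 0 < b) : a / (a + b) < 1 :=
  (div_lt_one (by positivity)).2 (by linarith)

noncomputable section

def esrIoscf (c Kd γ u : ℝ) : ℝ :=
  (1/2) * (2*u + (-u + c + Kd * γ) - Real.sqrt ((-u + c + Kd * γ)^2 + 4 * Kd * u * γ))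

namespace esrIoscf

variable {c Kd γ : ℝ}

lemma radicand_zero (c Kd γ : ℝ) :
    (-(0:ℝ) + c + Kd * γ)^2 + 4 * Kd * 0 * γ = (c + Kd * γ)^2 := by
  ring

lemma apply_zero (h : 0 ≤ c + Kd * γ) : esrIoscf c Kd γ 0 = 0 := by
  rw [esrIoscf, radicand_zero, Real.sqrt_sq h]
  ring

lemma hasDerivAt_zero (h : 0 < c + Kd * γ) :
    HasDerivAt (esrIoscf c Kd γ) (c / (c + Kd * γ)) 0 := by
  have hK : HasDerivAt (fun u : ℝ => -u + c + Kd * γ) (-1) 0 :=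
    ((hasDerivAt_id' 0).neg.add_const c).add_const (Kd * γ)
  have hradicand : HasDerivAt (fun u : ℝ => (-u + c + Kd * γ)^2 + 4 * Kd * u * γ)
      (2 * (Kd * γ) - 2 * c) 0 := by
    refine ((hK.pow 2).add (((hasDerivAt_id' 0).const_mul (4 * Kd)).mul_const γ)).congr_deriv ?_
    ring
  have hsqrt := (Real.hasDerivAt_sqrt (by rw [radicand_zero]; positivity)).comp 0 hradicand
  rw [radicand_zero, Real.sqrt_sq h.le] at hsqrt
  refine (((((hasDerivAt_id' 0).const_mul 2).add hK).sub hsqrt).const_mul (1/2 : ℝ)).congr_deriv ?_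
  field_simp
  ring

end esrIoscf

end

theorem stmt5 (c1 c2 K1d K2d γ1 γ2 : ℝ)
    (hc1 : 0 < c1) (hc2 : 0 < c2) (hK1 : 0 < K1d) (hK2 : 0 < K2d)
    (hγ1 : 0 < γ1) (hγ2 : 0 < γ2)
    (f1 f2 : ℝ → ℝ)
    (hf1 : f1 = fun u => (1/2) * (2*u + (-u + c1 + K1d * γ1)
      - Real.sqrt ((-u + c1 + K1d * γ1)^2 + 4 * K1d * u * γ1)))
    (hf2 : f2 = fun u => (1/2) * (2*u + (-u + c2 + K2d * γ2)
      - Real.sqrt ((-u + c2 + K2d * γ2)^2 + 4 * K2d * u * γ2))) :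
    HasDerivAt (f2 ∘ f1) (c1 * c2 / ((c1 + K1d * γ1) * (c2 + K2d * γ2))) 0 ∧
    c1 * c2 / ((c1 + K1d * γ1) * (c2 + K2d * γ2)) < 1 := by
  change f1 = esrIoscf c1 K1d γ1 at hf1
  change f2 = esrIoscf c2 K2d γ2 at hf2
  subst hf1 hf2
  have hKγ1 : 0 < K1d * γ1 := mul_pos hK1 hγ1
  have hKγ2 : 0 < K2d * γ2 := mul_pos hK2 hγ2
  have hd1 := esrIoscf.hasDerivAt_zero (c := c1) (by positivity : 0 < c1 + K1d * γ1)
  have hd2 := esrIoscf.hasDerivAt_zero (c := c2) (by positivity : 0 < c2 + K2d * γ2)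
  rw [← esrIoscf.apply_zero (by positivity : 0 ≤ c1 + K1d * γ1)] at hd2
  rw [mul_comm c1, mul_comm (c1 + _), ← div_mul_div_comm]
  exact ⟨hd2.comp 0 hd1, mul_lt_one_of_nonneg_of_lt_one_left (by positivity)
    (div_add_lt_one hc2.le hKγ2) (div_add_lt_one hc1.le hKγ1).le⟩
end

section
/- Let A be the n×n tridiagonal-cyclic matrix with diagonal entries −ai < 0, subdiagonal entries bi > 0 (entry (i+1, i) = bi for i = 1, …, n−1), and corner entry (1, n) = −bn < 0 (all other entries zero). If ∏_{i=1}^n (bi/ai) < sec(π/n)^n, then A is Hurwitz (all eigenvalues have strictly negative real part). State this for the case n = 3. -/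
open Matrix

theorem stmt10 (a1 a2 a3 b1 b2 b3 : ℝ)
    (ha1 : 0 < a1) (ha2 : 0 < a2) (ha3 : 0 < a3)
    (hb1 : 0 < b1) (hb2 : 0 < b2) (hb3 : 0 < b3)
    (hsec : (b1 / a1) * (b2 / a2) * (b3 / a3) < (1 / Real.cos (Real.pi / 3)) ^ 3)
    (A : Matrix (Fin 3) (Fin 3) ℝ)
    (hA : A = !![-a1, 0, -b3; b1, -a2, 0; 0, b2, -a3]) :
    ∀ μ : ℂ, (Matrix.charpoly (A.map (Complex.ofReal))).IsRoot μ → μ.re < 0 := by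
  intro μ hroot
  -- the secant bound becomes b1*b2*b3 < 8*(a1*a2*a3)
  have hB : b1 * b2 * b3 < 8 * (a1 * a2 * a3) := by
    rw [Real.cos_pi_div_three] at hsec
    rw [div_mul_div_comm, div_mul_div_comm, div_lt_iff₀ (by positivity)] at hsec
    norm_num at hsec
    linarith
  -- root equation
  have h : Polynomial.eval μ (Matrix.charpoly (A.map Complex.ofReal)) = 0 := hroot
  rw [Matrix.charpoly, ← Polynomial.coe_evalRingHom, RingHom.map_det, hA] at h
  simp [Matrix.det_fin_three, charmatrix, Matrix.map_apply] at h
  have heq : (μ + a1) * (μ + a2) * (μ + a3) + ((b1*b2*b3 : ℝ) : ℂ) = 0 := by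
    push_cast
    linear_combination h
  by_contra hcon
  push_neg at hcon
  obtain ⟨x, y⟩ := μ
  have hre : (0:ℝ) ≤ x := hcon
  have hRe := congrArg Complex.re heq
  have hIm := congrArg Complex.im heq
  simp [Complex.add_re, Complex.add_im, Complex.mul_re, Complex.mul_im] at hRe hIm
  have hIm' : y * ((x+a1)*(x+a2) + (x+a1)*(x+a3) + (x+a2)*(x+a3) - y^2) = 0 := by
    linear_combination hIm
  rcases eq_or_ne y 0 with h0 | h0
  · rw [h0] at hRe
    nlinarith [mul_pos (mul_pos (by linarith : (0:ℝ) < x+a1) (by linarith : (0:ℝ) < x+a2))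
      (by linarith : (0:ℝ) < x+a3), mul_pos (mul_pos hb1 hb2) hb3]
  · have hy2 : y^2 = (x+a1)*(x+a2) + (x+a1)*(x+a3) + (x+a2)*(x+a3) := by
      rcases mul_eq_zero.mp hIm' with h' | h'
      · exact absurd h' h0
      · linarith
    have key : b1*b2*b3 =
        ((x+a1)+(x+a2)+(x+a3)) * ((x+a1)*(x+a2) + (x+a1)*(x+a3) + (x+a2)*(x+a3))
          - (x+a1)*(x+a2)*(x+a3) := by
      linear_combination hRe + ((x+a1)+(x+a2)+(x+a3)) * hy2
    have hp1 : (0:ℝ) < x+a1 := by linarith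
    have hp2 : (0:ℝ) < x+a2 := by linarith
    have hp3 : (0:ℝ) < x+a3 := by linarith
    have amgm : ((x+a1)+(x+a2)+(x+a3)) * ((x+a1)*(x+a2) + (x+a1)*(x+a3) + (x+a2)*(x+a3))
          - (x+a1)*(x+a2)*(x+a3) ≥ 8 * ((x+a1)*(x+a2)*(x+a3)) := by
      nlinarith [mul_nonneg hp1.le (sq_nonneg ((x+a2)-(x+a3))),
        mul_nonneg hp2.le (sq_nonneg ((x+a1)-(x+a3))),
        mul_nonneg hp3.le (sq_nonneg ((x+a1)-(x+a2)))]
    have hmono : (x+a1)*(x+a2)*(x+a3) ≥ a1*a2*a3 := by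
      nlinarith [mul_nonneg (mul_nonneg hre hre) hre,
        mul_nonneg (mul_nonneg hre hre) ha1.le, mul_nonneg (mul_nonneg hre hre) ha2.le,
        mul_nonneg (mul_nonneg hre hre) ha3.le,
        mul_nonneg hre (mul_nonneg ha1.le ha2.le), mul_nonneg hre (mul_nonneg ha1.le ha3.le),
        mul_nonneg hre (mul_nonneg ha2.le ha3.le)]
    linarith
end

section
/- Let f : ℝ≥0 → ℝ≥0 be given by f(u) = c·g(u)/(K + g(u)) where g(u) = (−c + u − γK + sqrt((−c + u − γK)² + 4uγK))/(2γ) with c, γ, K > 0. Then f(u) < u for all u > 0. -/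
/-!
The steady state `g = g(u)` is the positive root of `γ g² - (u - c - γK) g - uK = 0`, and this
quadratic rearranges to `c g / (K + g) = u - γ g`: the output rate is the input rate minus the
degradation flux `γ g > 0`.
-/

open Real

lemma quadratic_root_eq {a b p : ℝ} (ha : a ≠ 0) (hd : 0 ≤ b ^ 2 + 4 * a * p) :
    a * ((b + √(b ^ 2 + 4 * a * p)) / (2 * a)) ^ 2
      = b * ((b + √(b ^ 2 + 4 * a * p)) / (2 * a)) + p := by
  generalize hs_def : √(b ^ 2 + 4 * a * p) = s
  have hs : s ^ 2 = b ^ 2 + 4 * a * p := hs_def ▸ sq_sqrt hd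
  field_simp
  linear_combination hs

lemma quadratic_root_pos {a b p : ℝ} (ha : 0 < a) (hp : 0 < p) :
    0 < (b + √(b ^ 2 + 4 * a * p)) / (2 * a) := by
  have h : |b| < √(b ^ 2 + 4 * a * p) := by
    rw [← sqrt_sq_eq_abs]
    exact sqrt_lt_sqrt (sq_nonneg b) (by nlinarith [mul_pos ha hp])
  exact div_pos (by linarith [neg_abs_le b]) (by linarith)

lemma michaelis_menten_eq_sub_of_steady_state {c γ K u g : ℝ} (hKg : K + g ≠ 0)
    (h : γ * g ^ 2 = (-c + u - γ * K) * g + u * K) :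
    c * g / (K + g) = u - γ * g := by
  rw [div_eq_iff hKg]
  linear_combination h

theorem stmt17_general (c γ K : ℝ) (hγ : 0 < γ) (hK : 0 < K)
    (g f : ℝ → ℝ)
    (hg : g = fun u => (-c + u - γ * K +
      Real.sqrt ((-c + u - γ * K)^2 + 4 * u * γ * K)) / (2 * γ))
    (hf : f = fun u => c * g u / (K + g u)) :
    ∀ u : ℝ, 0 < u → f u < u := by
  intro u hu
  have hdisc : 4 * u * γ * K = 4 * γ * (u * K) := by ring
  have hg_pos : 0 < g u := by
    simpa only [hg, hdisc] using quadratic_root_pos (b := -c + u - γ * K) hγ (mul_pos hu hK)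
  have hg_root : γ * g u ^ 2 = (-c + u - γ * K) * g u + u * K := by
    simpa only [hg, hdisc] using quadratic_root_eq (b := -c + u - γ * K) hγ.ne'
      (by positivity : 0 ≤ (-c + u - γ * K) ^ 2 + 4 * γ * (u * K))
  have hf_u : f u = u - γ * g u := by
    rw [hf]
    exact michaelis_menten_eq_sub_of_steady_state (by linarith) hg_root
  rw [hf_u]
  linarith [mul_pos hγ hg_pos]

theorem stmt17 (c γ K : ℝ) (hc : 0 < c) (hγ : 0 < γ) (hK : 0 < K)
    (g f : ℝ → ℝ)
    (hg : g = fun u => (-c + u - γ * K +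
      Real.sqrt ((-c + u - γ * K)^2 + 4 * u * γ * K)) / (2 * γ))
    (hf : f = fun u => c * g u / (K + g u)) :
    ∀ u : ℝ, 0 < u → f u < u :=
  stmt17_general c γ K hγ hK g f hg hf
end
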